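/- arXiv:2406.13691 — 2 statements merged into one kernel-verified Lean document; each statement's English description precedes it below -/
import Mathlib

section
/- Let G, H be symmetric positive definite J×J matrices such that G - H and G + (n-1)H are positive definite, and let Σ = Iₙ ⊗ (G - H) + 1_{n,n} ⊗ H. Then log det(Σ) = (n-1)·log det(G - H) + log det(G + (n-1)H). -/
/-!
Writing `A = G - H` and `1_{n,n} = u uᵀ` with `u` the all-ones vector, `Σ = I ⊗ A + (u ⊗ H)(uᵀ ⊗ I)`
is a rank-`J` update of `I ⊗ A`. By Sylvester's identity `det (1 + X Y) = det (1 + Y X)`,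
`det Σ = (det A)ⁿ · det (I + (uᵀu) A⁻¹ H) = (det A)ⁿ⁻¹ · det (A + n H)`, and `A + n H = G + (n - 1) H`.
-/

open Kronecker Matrix

namespace Matrix

theorem of_one_eq_replicateCol_mul_replicateRow {m R : Type*} [Semiring R] :
    (of fun _ _ => (1 : R) : Matrix m m R) =
      replicateCol Unit (1 : m → R) * replicateRow Unit (1 : m → R) := by
  ext i j
  simp [Matrix.mul_apply]

variable {m ι R : Type*} [Fintype ι] [DecidableEq ι] [CommRing R]

theorem det_one_add_scalar_kronecker (c : R) (M : Matrix ι ι R) :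
    det (1 + (of fun _ _ => c : Matrix Unit Unit R) ⊗ₖ M) = det (1 + c • M) := by
  rw [← det_reindex_self (Equiv.punitProd ι)]
  congr 1
  ext i j
  simp [one_apply]

/-- Multiplying by `det A` avoids the exponent `card m - 1` and hence the case `m = ∅`. -/
theorem det_one_kronecker_add_of_one_kronecker_mul_det [Fintype m] [DecidableEq m]
    (A H : Matrix ι ι R) (hA : IsUnit A.det) :
    det ((1 : Matrix m m R) ⊗ₖ A + (of fun _ _ => (1 : R)) ⊗ₖ H) * det A =
      det A ^ Fintype.card m * det (A + (Fintype.card m : R) • H) := by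
  set u := replicateCol Unit (1 : m → R)
  set v := replicateRow Unit (1 : m → R)
  have hfactor : (1 : Matrix m m R) ⊗ₖ A + (of fun _ _ => (1 : R)) ⊗ₖ H =
      (1 ⊗ₖ A) * (1 + (u ⊗ₖ (A⁻¹ * H)) * (v ⊗ₖ (1 : Matrix ι ι R))) := by
    rw [Matrix.mul_add, Matrix.mul_one, ← Matrix.mul_assoc, ← mul_kronecker_mul,
      ← mul_kronecker_mul, Matrix.one_mul, mul_nonsing_inv_cancel_left _ _ hA, Matrix.mul_one,
      of_one_eq_replicateCol_mul_replicateRow]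
  have hvu : v * u = of fun _ _ => (Fintype.card m : R) := by
    rw [replicateRow_mul_replicateCol, one_dotProduct_one]
  rw [hfactor, det_mul, det_kronecker, det_one, one_pow, one_mul, det_one_add_mul_comm,
    ← mul_kronecker_mul, hvu, Matrix.one_mul, det_one_add_scalar_kronecker, mul_assoc,
    mul_comm (det _) (det A), ← det_mul, Matrix.mul_add, Matrix.mul_one, Matrix.mul_smul,
    mul_nonsing_inv_cancel_left _ _ hA]

end Matrix

theorem stmt_6_general (n J : ℕ)
    (G H : Matrix (Fin J) (Fin J) ℝ)
    (hGH : (G - H).PosDef) (hGH' : (G + ((n : ℝ) - 1) • H).PosDef)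
    (Sg : Matrix (Fin n × Fin J) (Fin n × Fin J) ℝ)
    (hSg : Sg = (1 : Matrix (Fin n) (Fin n) ℝ) ⊗ₖ (G - H) +
        (Matrix.of fun _ _ => (1 : ℝ) : Matrix (Fin n) (Fin n) ℝ) ⊗ₖ H) :
    Real.log Sg.det =
      ((n : ℝ) - 1) * Real.log (G - H).det +
        Real.log (G + ((n : ℝ) - 1) • H).det := by
  have hA := hGH.det_pos
  have hB := hGH'.det_pos
  have hdet := det_one_kronecker_add_of_one_kronecker_mul_det (m := Fin n) (G - H) H
    (isUnit_iff_ne_zero.mpr hA.ne')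
  rw [← hSg, Fintype.card_fin, show G - H + (n : ℝ) • H = G + ((n : ℝ) - 1) • H by module]
    at hdet
  have hSg_pos : 0 < Sg.det := pos_of_mul_pos_left (hdet ▸ by positivity) hA.le
  have hlog := congrArg Real.log hdet
  rw [Real.log_mul hSg_pos.ne' hA.ne', Real.log_mul (by positivity) hB.ne', Real.log_pow] at hlog
  linarith

theorem stmt_6 (n J : ℕ) (hn : 1 ≤ n)
    (G H : Matrix (Fin J) (Fin J) ℝ) (hG : G.PosDef) (hH : H.IsSymm)
    (hGH : (G - H).PosDef) (hGH' : (G + ((n : ℝ) - 1) • H).PosDef)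
    (Sg : Matrix (Fin n × Fin J) (Fin n × Fin J) ℝ)
    (hSg : Sg = (1 : Matrix (Fin n) (Fin n) ℝ) ⊗ₖ (G - H) +
        (Matrix.of fun _ _ => (1 : ℝ) : Matrix (Fin n) (Fin n) ℝ) ⊗ₖ H) :
    Real.log Sg.det =
      ((n : ℝ) - 1) * Real.log (G - H).det +
        Real.log (G + ((n : ℝ) - 1) • H).det :=
  stmt_6_general n J G H hGH hGH' Sg hSg
end

section
/- Let n ≥ 2 and Kη(t̃,t), Σ₀⁻¹, Kμ(t,t̃), Σ₁⁻¹ be matrices of compatible sizes. Then ((n/(n-1)) Iₙ ⊗ E - (1/(n-1)) 1_{n,n} ⊗ E)(Iₙ ⊗ F + (1/n) 1_{n,n} ⊗ (G - F))(1ₙ ⊗ M) = 0, where E = Kη(t̃,t), F = Σ₀⁻¹, G = Σ₁⁻¹, M = Kμ(t,t̃). In words: the product of the centered Kronecker block matrix, the block-structured inverse, and a column-replicated matrix vanishes. -/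
/-!
With `u` the all-ones column and `J = u uᵀ` we have `J u = n u`, so both factors send a
column-replicated matrix `u ⊗ X` to another one. The middle factor sends `u ⊗ M` to
`u ⊗ (F M + (G - F) M)`, and the centring factor multiplies by the scalar
`n/(n-1) - n/(n-1) = 0`.
-/

open Kronecker

namespace Matrix

variable {R ι κ ν : Type*} [CommRing R]

theorem ones_mul_ones [Fintype κ] :
    (of fun _ _ => 1 : Matrix ι κ R) * (of fun _ _ => 1 : Matrix κ ν R) =
      (Fintype.card κ : R) • of fun _ _ => 1 := by
  ext i j
  simp [mul_apply]

theorem kronecker_sub {m n : Type*} (A : Matrix ι κ R) (B₁ B₂ : Matrix m n R) :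
    A ⊗ₖ (B₁ - B₂) = A ⊗ₖ B₁ - A ⊗ₖ B₂ := by
  ext
  simp [mul_sub]

variable [Fintype ι] [DecidableEq ι] {m n p : Type*} [Fintype m]

theorem one_kronecker_add_ones_kronecker_mul_ones_kronecker
    (F D : Matrix n m R) (s : R) (Y : Matrix m p R) :
    (1 ⊗ₖ F + s • ((of fun _ _ => 1 : Matrix ι ι R) ⊗ₖ D)) *
        ((of fun _ _ => 1 : Matrix ι κ R) ⊗ₖ Y) =
      (of fun _ _ => 1 : Matrix ι κ R) ⊗ₖ (F * Y + (s * Fintype.card ι) • (D * Y)) := by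
  rw [Matrix.add_mul, Matrix.smul_mul, ← mul_kronecker_mul, ← mul_kronecker_mul, Matrix.one_mul,
    ones_mul_ones, smul_kronecker, smul_smul, ← kronecker_smul, ← kronecker_add]

theorem one_kronecker_sub_ones_kronecker_mul_ones_kronecker
    (E : Matrix n m R) (a b : R) (Y : Matrix m p R) :
    (a • (1 ⊗ₖ E) - b • ((of fun _ _ => 1 : Matrix ι ι R) ⊗ₖ E)) *
        ((of fun _ _ => 1 : Matrix ι κ R) ⊗ₖ Y) =
      (of fun _ _ => 1 : Matrix ι κ R) ⊗ₖ ((a - b * Fintype.card ι) • (E * Y)) := by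
  rw [Matrix.sub_mul, Matrix.smul_mul, Matrix.smul_mul, ← mul_kronecker_mul, ← mul_kronecker_mul,
    Matrix.one_mul, ones_mul_ones, smul_kronecker, smul_smul, ← kronecker_smul, ← kronecker_smul,
    ← kronecker_sub, sub_smul]

end Matrix

theorem stmt_18_general (n p J q : ℕ)
    (E : Matrix (Fin p) (Fin J) ℝ) (F G : Matrix (Fin J) (Fin J) ℝ)
    (M : Matrix (Fin J) (Fin q) ℝ) :
    (((n : ℝ) / ((n : ℝ) - 1)) • ((1 : Matrix (Fin n) (Fin n) ℝ) ⊗ₖ E) -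
        (1 / ((n : ℝ) - 1)) • ((Matrix.of fun _ _ => (1 : ℝ) : Matrix (Fin n) (Fin n) ℝ) ⊗ₖ E)) *
      ((1 : Matrix (Fin n) (Fin n) ℝ) ⊗ₖ F +
        ((1 : ℝ) / n) • ((Matrix.of fun _ _ => (1 : ℝ) : Matrix (Fin n) (Fin n) ℝ) ⊗ₖ (G - F))) *
      ((Matrix.of fun (_ : Fin n) (_ : Fin 1) => (1 : ℝ)) ⊗ₖ M) = 0 := by
  rw [Matrix.mul_assoc, Matrix.one_kronecker_add_ones_kronecker_mul_ones_kronecker,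
    Matrix.one_kronecker_sub_ones_kronecker_mul_ones_kronecker, Fintype.card_fin,
    one_div_mul_eq_div, sub_self, zero_smul, Matrix.kronecker_zero]

theorem stmt_18 (n p J q : ℕ) (hn : 2 ≤ n)
    (E : Matrix (Fin p) (Fin J) ℝ) (F G : Matrix (Fin J) (Fin J) ℝ)
    (M : Matrix (Fin J) (Fin q) ℝ) :
    (((n : ℝ) / ((n : ℝ) - 1)) • ((1 : Matrix (Fin n) (Fin n) ℝ) ⊗ₖ E) -
        (1 / ((n : ℝ) - 1)) • ((Matrix.of fun _ _ => (1 : ℝ) : Matrix (Fin n) (Fin n) ℝ) ⊗ₖ E)) *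
      ((1 : Matrix (Fin n) (Fin n) ℝ) ⊗ₖ F +
        ((1 : ℝ) / n) • ((Matrix.of fun _ _ => (1 : ℝ) : Matrix (Fin n) (Fin n) ℝ) ⊗ₖ (G - F))) *
      ((Matrix.of fun (_ : Fin n) (_ : Fin 1) => (1 : ℝ)) ⊗ₖ M) = 0 :=
  stmt_18_general n p J q E F G M
end
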